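/- If a convergent interaction system has reaction functions that are all self-independent and have k-recall for some k ∈ ℤ+, then the system is strongly convergent: for every initial history H and fair schedule σ under which the trajectory converges to a state a, there exists T such that for every fair schedule σ' agreeing with σ on steps 1 through T, the (H,σ')-trajectory also converges to a. -/

import Mathlib

/-!
Once a trajectory has sat at `a` for `k` steps, `k`-recall makes node `j`'s reaction at time `t`
equal to `f j (replicate t a)`. The point is that every node eventually reproduces `a j` there;
since a fair trajectory converging to `a` activates each node infinitely often, `a j` is at
least reproduced at infinitely many times. If node `i` failed infinitely often, prolong a prefix
of `σ` by singleton activations at times more than `k` apart, cycling through: `i` at a failing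
time (by self-independence it only sees the others, all at `a`), `i` at a time where it returns
to `a`, and a round-robin node at a time where it stays at `a`. This fair trajectory oscillates,
contradicting convergence. So past some `T` the state `a` is absorbing, and a schedule agreeing
with `σ` up to `T` reproduces the trajectory up to `T` and then stays at `a`.
-/

variable {n : ℕ} {A : Fin n → Type*}

/-- A schedule is fair if it activates every node infinitely often. -/
def Fair (σ : ℕ → Finset (Fin n)) : Prop := ∀ i : Fin n, ∀ T : ℕ, ∃ t ≥ T, i ∈ σ t

/-- A sequence of states converges to `b` if it is eventually constantly `b`. -/
def ConvTo (x : ℕ → ∀ j, A j) (b : ∀ j, A j) : Prop := ∃ T : ℕ, ∀ t > T, x t = b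

/-- `x` is the `(H,σ)`-trajectory of the interaction system with (history-dependent)
reaction functions `f`: it extends the initial history `H`, and at each time
`t ≥ |H|` every activated node applies its reaction function to the entire history
so far while the other nodes keep their previous actions. -/
def IsTraj (f : ∀ i : Fin n, List (∀ j, A j) → A i) (σ : ℕ → Finset (Fin n))
    (H : List (∀ j, A j)) (x : ℕ → ∀ j, A j) : Prop :=
  (∀ (t : ℕ) (ht : t < H.length), x t = H.get ⟨t, ht⟩) ∧
  (∀ t : ℕ, H.length ≤ t → ∀ i : Fin n,
    x t i = if i ∈ σ t then f i (List.ofFn fun s : Fin t => x s) else x (t - 1) i)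

/-- `f` has `k`-recall: each reaction function depends only on the `k` most recent
states of the history and the time counter (the history's length). -/
def KRecall (k : ℕ) (f : ∀ i : Fin n, List (∀ j, A j) → A i) : Prop :=
  ∀ (i : Fin n) (L L' : List (∀ j, A j)), L.length = L'.length →
    L.reverse.take k = L'.reverse.take k → f i L = f i L'

/-- `f` is self-independent: each node's reaction function ignores that node's own
(past and present) actions in the history. -/
def SelfIndepH (f : ∀ i : Fin n, List (∀ j, A j) → A i) : Prop :=
  ∀ (i : Fin n) (L L' : List (∀ j, A j)),
    List.Forall₂ (fun a b : ∀ j, A j => ∀ j : Fin n, j ≠ i → a j = b j) L L' →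
    f i L = f i L'

/-- The system is convergent: every fair trajectory from every (nonempty) initial
history is eventually constant. -/
def ConvergentH (f : ∀ i : Fin n, List (∀ j, A j) → A i) : Prop :=
  ∀ H : List (∀ j, A j), H ≠ [] → ∀ σ : ℕ → Finset (Fin n), Fair σ →
    ∀ x : ℕ → ∀ j, A j, IsTraj f σ H x → ∃ b, ConvTo x b

section

variable {f : ∀ i : Fin n, List (∀ j, A j) → A i} {k : ℕ}

theorem KRecall.apply_ofFn_eq_replicate (hkr : KRecall k f) (i : Fin n) {t : ℕ}
    {u : ℕ → ∀ j, A j} {c : ∀ j, A j} (hu : ∀ s < t, t - k ≤ s → u s = c) :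
    f i (List.ofFn fun s : Fin t => u s) = f i (List.replicate t c) := by
  refine hkr i _ _ (by simp) (List.ext_getElem (by simp) fun m h₁ h₂ => ?_)
  simp only [List.length_take, List.length_reverse, List.length_ofFn] at h₁
  simp only [List.getElem_take, List.getElem_reverse, List.getElem_ofFn, List.getElem_replicate,
    List.length_ofFn]
  exact hu _ (by omega) (by omega)

theorem SelfIndepH.apply_replicate_eq (hsi : SelfIndepH f) (i : Fin n) (t : ℕ)
    {c a : ∀ j, A j} (hc : ∀ j, j ≠ i → c j = a j) :
    f i (List.replicate t c) = f i (List.replicate t a) := by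
  refine hsi i _ _ ?_
  induction t with
  | zero => exact List.Forall₂.nil
  | succ t ih => exact List.Forall₂.cons hc ih

end

theorem exists_seq_forall_of_frequently {Q : ℕ → ℕ → Prop}
    (hQ : ∀ m, ∃ᶠ t in Filter.atTop, Q m t) (N₀ g : ℕ) :
    ∃ E : ℕ → ℕ, N₀ ≤ E 0 ∧ (∀ m, E m + g < E (m + 1)) ∧ ∀ m, Q m (E m) := by
  choose e he hQe using fun m => Filter.frequently_atTop.mp (hQ m)
  refine ⟨fun m => Nat.rec (e 0 N₀) (fun m prev => e (m + 1) (prev + g + 1)) m, he _ _,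
    fun m => he _ _, fun m => ?_⟩
  cases m <;> exact hQe _ _

noncomputable def traj (f : ∀ i : Fin n, List (∀ j, A j) → A i) (σ : ℕ → Finset (Fin n))
    (H : List (∀ j, A j)) (t : ℕ) : ∀ j, A j :=
  if h : t < H.length then H.get ⟨t, h⟩
  else fun i => if i ∈ σ t then f i (List.ofFn fun s : Fin t => traj f σ H s)
    -- the last branch is junk, reached only if `H = []`
    else if 0 < t then traj f σ H (t - 1) i else f i []
termination_by t
decreasing_by
  all_goals first | exact Fin.is_lt _ | omega

theorem isTraj_traj {f : ∀ i : Fin n, List (∀ j, A j) → A i} {σ : ℕ → Finset (Fin n)}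
    {H : List (∀ j, A j)} (hH : H ≠ []) : IsTraj f σ H (traj f σ H) := by
  refine ⟨fun t ht => by rw [traj, dif_pos ht], fun t ht i => ?_⟩
  have ht₀ : 0 < t := (List.length_pos_iff.mpr hH).trans_le ht
  rw [traj, dif_neg (by omega)]
  simp only [if_pos ht₀]

namespace IsTraj

variable {f : ∀ i : Fin n, List (∀ j, A j) → A i} {σ σ' : ℕ → Finset (Fin n)}
  {H : List (∀ j, A j)} {x x' : ℕ → ∀ j, A j}

theorem eq_of_le (hH : H ≠ []) (hx : IsTraj f σ H x) (hx' : IsTraj f σ' H x') {T : ℕ}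
    (hσ : ∀ t, 1 ≤ t → t ≤ T → σ' t = σ t) : ∀ t ≤ T, x' t = x t := by
  intro t
  induction t using Nat.strong_induction_on with
  | _ t ih =>
    intro htT
    by_cases ht : t < H.length
    · rw [hx.1 t ht, hx'.1 t ht]
    have ht₁ : 1 ≤ t := (List.length_pos_iff.mpr hH).trans_le (not_lt.mp ht)
    funext i
    rw [hx.2 t (not_lt.mp ht) i, hx'.2 t (not_lt.mp ht) i, hσ t ht₁ htT,
      ih (t - 1) (by omega) (by omega)]
    congr 3
    funext s
    exact ih s s.isLt (by omega)

theorem eq_of_quiet (hx : IsTraj f σ H x) {s t : ℕ} (hs : H.length ≤ s + 1) (hst : s ≤ t)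
    (hq : ∀ u, s < u → u ≤ t → σ u = ∅) : x t = x s := by
  induction t, hst using Nat.le_induction with
  | base => rfl
  | succ t hst ih =>
    funext i
    rw [hx.2 (t + 1) (by omega) i, hq (t + 1) (by omega) le_rfl, if_neg (Finset.notMem_empty i),
      Nat.add_sub_cancel, ih fun u hu hut => hq u hu (by omega)]

theorem eq_update_of_eq_singleton (hx : IsTraj f σ H x) {t : ℕ} (ht : H.length ≤ t) {i : Fin n}
    (hσ : σ t = {i}) :
    x t = Function.update (x (t - 1)) i (f i (List.ofFn fun s : Fin t => x s)) := by
  funext j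
  rw [hx.2 t ht j, hσ]
  by_cases hji : j = i
  · subst hji; simp
  · simp [hji]

end IsTraj

open Classical in
noncomputable def eventSched (σ : ℕ → Finset (Fin n)) (E : ℕ → ℕ) (act : ℕ → Fin n)
    (t : ℕ) : Finset (Fin n) :=
  if t ≤ E 0 then σ t else Finset.univ.filter fun j => ∃ m, E m = t ∧ act m = j

section eventSched

variable {σ : ℕ → Finset (Fin n)} {E : ℕ → ℕ} {act : ℕ → Fin n}

theorem eventSched_of_le {t : ℕ} (ht : t ≤ E 0) : eventSched σ E act t = σ t := by
  simp [eventSched, ht]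

theorem eventSched_event (hE : StrictMono E) (m : ℕ) :
    eventSched σ E act (E (m + 1)) = {act (m + 1)} := by
  ext j
  simp only [eventSched, not_le.mpr (hE m.succ_pos), if_false, Finset.mem_filter,
    Finset.mem_univ, true_and, Finset.mem_singleton, hE.injective.eq_iff]
  exact ⟨fun ⟨_, hm, hj⟩ => hm ▸ hj.symm, fun hj => ⟨_, rfl, hj.symm⟩⟩

theorem eventSched_of_lt_of_lt (hE : StrictMono E) {m t : ℕ} (hmt : E m < t)
    (htm : t < E (m + 1)) : eventSched σ E act t = ∅ := by
  have h₀ : ¬ t ≤ E 0 := fun h => (hE.monotone m.zero_le).not_gt (hmt.trans_le h)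
  simp only [eventSched, h₀, if_false, Finset.filter_eq_empty_iff, Finset.mem_univ, true_implies]
  rintro j ⟨p, rfl, -⟩
  rcases lt_or_ge p (m + 1) with hp | hp
  · exact hmt.not_ge (hE.monotone (Nat.le_of_lt_succ hp))
  · exact htm.not_ge (hE.monotone hp)

theorem fair_eventSched (hE : StrictMono E) (hact : ∀ j, ∃ᶠ m in Filter.atTop, act m = j) :
    Fair (eventSched σ E act) := by
  intro j T
  obtain ⟨m, hm, hj⟩ := Filter.frequently_atTop.mp (hact j) (T + 1)
  obtain ⟨m, rfl⟩ : ∃ m', m = m' + 1 := ⟨m - 1, by omega⟩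
  refine ⟨E (m + 1), by have : m + 1 ≤ E (m + 1) := hE.id_le _; omega, ?_⟩
  rw [eventSched_event hE, hj]
  exact Finset.mem_singleton_self j

end eventSched

section

variable {f : ∀ i : Fin n, List (∀ j, A j) → A i} {k : ℕ} {σ : ℕ → Finset (Fin n)}
  {H : List (∀ j, A j)} {x : ℕ → ∀ j, A j}

theorem IsTraj.apply_eventSched_succ (hkr : KRecall k f) {E : ℕ → ℕ} {act : ℕ → Fin n}
    (hx : IsTraj f (eventSched σ E act) H x) (hH : H.length ≤ E 0 + 1)
    (hgap : ∀ m, E m + k < E (m + 1)) (m : ℕ) :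
    x (E (m + 1)) = Function.update (x (E m)) (act (m + 1))
      (f (act (m + 1)) (List.replicate (E (m + 1)) (x (E m)))) := by
  have hE : StrictMono E := strictMono_nat_of_lt_succ fun m => (hgap m).trans_le' le_self_add
  have hgapm := hgap m
  have hHm : H.length ≤ E m + 1 := hH.trans (by have := hE.monotone m.zero_le; omega)
  have hquiet : ∀ u, E m ≤ u → u < E (m + 1) → x u = x (E m) := fun u hmu hu =>
    hx.eq_of_quiet hHm hmu fun v hv hvu => eventSched_of_lt_of_lt hE hv (hvu.trans_lt hu)
  rw [hx.eq_update_of_eq_singleton (by omega) (eventSched_event hE m),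
    hquiet _ (by omega) (by omega),
    hkr.apply_ofFn_eq_replicate _ fun s hs hks => hquiet s (by omega) hs]

theorem frequently_apply_replicate_eq (hkr : KRecall k f) (hσ : Fair σ) (hx : IsTraj f σ H x)
    {a : ∀ j, A j} (ha : ConvTo x a) (j : Fin n) :
    ∃ᶠ t in Filter.atTop, f j (List.replicate t a) = a j := by
  obtain ⟨T₁, hT₁⟩ := ha
  refine Filter.frequently_atTop.mpr fun N => ?_
  obtain ⟨t, ht, hj⟩ := hσ j (N + T₁ + k + H.length + 1)
  have hxt := hx.2 t (by omega) j
  rw [if_pos hj, hT₁ t (by omega),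
    hkr.apply_ofFn_eq_replicate j fun s hs hks => hT₁ s (by omega)] at hxt
  exact ⟨t, by omega, hxt.symm⟩

theorem IsTraj.eq_of_apply_replicate_eq (hkr : KRecall k f) (hx : IsTraj f σ H x) {a : ∀ j, A j}
    {T₁ T : ℕ} (hT : T₁ + k < T) (hH : H.length ≤ T + 1)
    (hpre : ∀ t, T₁ < t → t ≤ T → x t = a)
    (hfix : ∀ t > T, ∀ j, f j (List.replicate t a) = a j) : ∀ t > T₁, x t = a := by
  intro t
  induction t using Nat.strong_induction_on with
  | _ t ih =>
    intro ht
    by_cases htT : t ≤ T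
    · exact hpre t ht htT
    funext j
    rw [hx.2 t (by omega) j]
    split
    · rw [hkr.apply_ofFn_eq_replicate j fun s hs hks => ih s hs (by omega), hfix t (by omega)]
    · rw [ih (t - 1) (by omega) (by omega)]

end

theorem eventually_apply_replicate_eq {f : ∀ i : Fin n, List (∀ j, A j) → A i} {k : ℕ}
    (hsi : SelfIndepH f) (hkr : KRecall k f) (hconv : ConvergentH f) {H : List (∀ j, A j)}
    (hH : H ≠ []) {σ : ℕ → Finset (Fin n)} (hσ : Fair σ) {x : ℕ → ∀ j, A j}
    (hx : IsTraj f σ H x) {a : ∀ j, A j} (ha : ConvTo x a) (i : Fin n) :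
    ∀ᶠ t in Filter.atTop, f i (List.replicate t a) = a i := by
  by_contra hbad
  rw [Filter.not_eventually] at hbad
  obtain ⟨T₁, hT₁⟩ := ha
  let act : ℕ → Fin n := fun m => if m % 3 = 0 then ⟨m / 3 % n, Nat.mod_lt _ i.pos⟩ else i
  have hact : ∀ j, ∃ᶠ m in Filter.atTop, act m = j := fun j =>
    Filter.frequently_atTop.mpr fun N => ⟨3 * (j + n * N), by nlinarith [i.pos], by
      simp only [act, Nat.mul_mod_right, if_true, Nat.mul_div_cancel_left _ three_pos,
        Nat.add_mul_mod_self_left, Nat.mod_eq_of_lt j.isLt]⟩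
  -- Event `3p + 1` moves `i` away from `a`, event `3p + 2` moves it back, and event `3p + 3`
  -- activates the next node in round robin, which stays at `a`.
  obtain ⟨E, hE₀, hgap, hEQ⟩ := exists_seq_forall_of_frequently
    (Q := fun m t => if m % 3 = 1 then f i (List.replicate t a) ≠ a i
      else f (act m) (List.replicate t a) = a (act m))
    (fun m => by
      split_ifs
      exacts [hbad, frequently_apply_replicate_eq hkr hσ hx ⟨T₁, hT₁⟩ _])
    (T₁ + H.length + 1) k
  have hE : StrictMono E := strictMono_nat_of_lt_succ fun m => (hgap m).trans_le' le_self_add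
  have hy := isTraj_traj (f := f) (σ := eventSched σ E act) hH
  set y := traj f (eventSched σ E act) H
  have hy₀ : y (E 0) = a := (hx.eq_of_le hH hy (fun t _ ht => eventSched_of_le ht) _ le_rfl).trans
    (hT₁ _ (by omega))
  have step : ∀ m, (∀ j, j ≠ act (m + 1) → y (E m) j = a j) →
      y (E (m + 1)) = Function.update (y (E m)) (act (m + 1))
        (f (act (m + 1)) (List.replicate (E (m + 1)) a)) := fun m hm => by
    rw [hy.apply_eventSched_succ hkr (by omega) hgap, hsi.apply_replicate_eq _ _ hm]
  have restore : ∀ m, (m + 1) % 3 ≠ 1 → (∀ j, j ≠ act (m + 1) → y (E m) j = a j) →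
      y (E (m + 1)) = a := fun m hm₁ hm => by
    have hfix := hEQ (m + 1)
    simp only [if_neg hm₁] at hfix
    rw [step m hm, Function.update_eq_iff]
    exact ⟨hfix, hm⟩
  have phase : ∀ p, y (E (3 * p)) = a →
      y (E (3 * p + 1)) i ≠ a i ∧ y (E (3 * p + 2)) = a ∧ y (E (3 * (p + 1))) = a := by
    intro p hp
    have hi₁ : act (3 * p + 1) = i := if_neg (by omega)
    have hi₂ : act (3 * p + 2) = i := if_neg (by omega)
    have hbad₁ := hEQ (3 * p + 1)
    simp only [if_pos (show (3 * p + 1) % 3 = 1 by omega)] at hbad₁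
    have hy₁ := step (3 * p) (fun j _ => congrFun hp j)
    rw [hp, hi₁] at hy₁
    have hy₂ := restore (3 * p + 1) (by omega) fun j hj => by
      rw [hy₁, Function.update_of_ne (hi₂ ▸ hj)]
    refine ⟨by rwa [hy₁, Function.update_self], hy₂, ?_⟩
    exact restore (3 * p + 2) (by omega) fun j _ => congrFun hy₂ j
  have hcycle : ∀ p, y (E (3 * p)) = a := fun p => by
    induction p with
    | zero => exact hy₀
    | succ p ih => exact (phase p ih).2.2
  obtain ⟨b, T, hb⟩ := hconv H hH _ (fair_eventSched hE hact) y hy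
  obtain ⟨hosc, hrest, -⟩ := phase T (hcycle T)
  have hT : T < E (3 * T + 1) := by have : 3 * T + 1 ≤ E (3 * T + 1) := hE.id_le _; omega
  exact hosc (by
    rw [hb _ hT, ← hb _ (hT.trans (hE (show 3 * T + 1 < 3 * T + 2 by omega))), hrest])

theorem stmt19_general (n : ℕ) (A : Fin n → Type*) (k : ℕ)
    (f : ∀ i : Fin n, List (∀ j, A j) → A i)
    (hsi : SelfIndepH f) (hkr : KRecall k f) (hconv : ConvergentH f) :
    ∀ H : List (∀ j, A j), H ≠ [] →
      ∀ σ : ℕ → Finset (Fin n), Fair σ →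
        ∀ x : ℕ → ∀ j, A j, IsTraj f σ H x →
          ∀ a : ∀ j, A j, ConvTo x a →
            ∃ T : ℕ, ∀ σ' : ℕ → Finset (Fin n), Fair σ' →
              (∀ t : ℕ, 1 ≤ t → t ≤ T → σ' t = σ t) →
              ∀ x' : ℕ → ∀ j, A j, IsTraj f σ' H x' → ConvTo x' a := by
  intro H hH σ hσ x hx a ha
  obtain ⟨T₀, hT₀⟩ := Filter.eventually_atTop.mp
    (Filter.eventually_all.mpr (eventually_apply_replicate_eq hsi hkr hconv hH hσ hx ha))
  obtain ⟨T₁, hT₁⟩ := ha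
  refine ⟨T₁ + k + H.length + T₀ + 1, fun σ' _ hσσ' x' hx' => ⟨T₁, ?_⟩⟩
  refine hx'.eq_of_apply_replicate_eq (T := T₁ + k + H.length + T₀ + 1) hkr (by omega)
    (by omega) (fun t ht htT => ?_) fun t ht j => hT₀ t (by omega) j
  rw [hx.eq_of_le hH hx' hσσ' t htT]
  exact hT₁ t ht

/-- If a convergent interaction system has reaction functions that are all
self-independent and have `k`-recall for some positive `k`, then the system is
strongly convergent: whenever the `(H,σ)`-trajectory converges to `a` for a fair
schedule `σ`, there exists `T` such that for every fair schedule `σ'` agreeing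
with `σ` on steps `1` through `T`, the `(H,σ')`-trajectory also converges to `a`. -/
theorem stmt19 (n : ℕ) (A : Fin n → Type*) (k : ℕ) (hk : 0 < k)
    (f : ∀ i : Fin n, List (∀ j, A j) → A i)
    (hsi : SelfIndepH f) (hkr : KRecall k f) (hconv : ConvergentH f) :
    ∀ H : List (∀ j, A j), H ≠ [] →
      ∀ σ : ℕ → Finset (Fin n), Fair σ →
        ∀ x : ℕ → ∀ j, A j, IsTraj f σ H x →
          ∀ a : ∀ j, A j, ConvTo x a →
            ∃ T : ℕ, ∀ σ' : ℕ → Finset (Fin n), Fair σ' →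
              (∀ t : ℕ, 1 ≤ t → t ≤ T → σ' t = σ t) →
              ∀ x' : ℕ → ∀ j, A j, IsTraj f σ' H x' → ConvTo x' a :=
  stmt19_general n A k f hsi hkr hconv
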